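/- Let f_{κ,θ}(x) = c_{k,κ} exp(κ x'θ) be the FvML density and fix a unit vector θ. Then the map κ ↦ ∫_{S^{k-1}} (√(f_{κ+s,θ}(x)) − √(f_{κ,θ}(x)) − s ∂_κ √(f_{κ,θ}(x)))² dσ(x) is o(s²) as s → 0, for every κ > 0; i.e., κ ↦ √(f_{κ,θ}) is differentiable in quadratic mean. -/

import Mathlib

open MeasureTheory Real Asymptotics

/-- Modified Bessel function of the first kind (integral representation). -/
noncomputable def besselI (ν κ : ℝ) : ℝ :=
  (κ / 2) ^ ν / (Real.sqrt π * Real.Gamma (ν + 1 / 2)) *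
    ∫ t in (-1 : ℝ)..1, Real.exp (κ * t) * (1 - t ^ 2) ^ (ν - 1 / 2)

/-- The FvML normalizing constant. -/
noncomputable def cFvML (k : ℕ) (κ : ℝ) : ℝ :=
  (κ / 2) ^ ((k : ℝ) / 2 - 1) / (Real.Gamma ((k : ℝ) / 2) * besselI ((k : ℝ) / 2 - 1) κ)

/-- The FvML density `f_{κ,θ}(x) = c_{k,κ} exp(κ x'θ)`. -/
noncomputable def fvml (k : ℕ) (κ : ℝ) (θ x : EuclideanSpace ℝ (Fin k)) : ℝ :=
  cFvML k κ * Real.exp (κ * (inner ℝ x θ : ℝ))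

/-!
Write `√f_{u,θ}(x) = a(u) e^{u x'θ/2}` with `a = √c_{k,·}`. The constant `c_{k,u}` is a quotient of
a power of `u` and a parametric integral `∫₋₁¹ e^{ut} (1 - t²)^p dt`, which can be differentiated
under the integral sign, so `a` is differentiable at `κ`. Splitting the remainder as in the product
rule, and using `|x'θ| ≤ 1` on the sphere, it is bounded uniformly in `x` by
`C (|a(κ+s) - a(κ) - s a'(κ)| + K s²) = o(s)`; squaring and integrating over the finite measure `σ`
gives `o(s²)`.
-/

open Filter Topology Set intervalIntegral
open scoped Interval

lemma intervalIntegrable_one_sub_sq_rpow_zero_one {p : ℝ} (hp : -1 < p) :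
    IntervalIntegrable (fun t : ℝ => (1 - t ^ 2) ^ p) volume 0 1 := by
  have h₁ : IntervalIntegrable (fun t : ℝ => (1 - t) ^ p) volume 0 1 := by
    simpa using ((intervalIntegrable_rpow' (a := 0) (b := 1) hp).comp_sub_left 1).symm
  have h₂ : ContinuousOn (fun t : ℝ => (1 + t) ^ p) (uIcc 0 1) := by
    refine ContinuousOn.rpow_const (by fun_prop) fun t ht => Or.inl ?_
    rw [uIcc_of_le zero_le_one] at ht
    linarith [ht.1]
  refine (h₁.continuousOn_mul h₂).congr fun t ht => ?_
  rw [uIoc_of_le zero_le_one] at ht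
  rw [← Real.mul_rpow (by linarith [ht.1]) (by linarith [ht.2])]
  ring_nf

lemma intervalIntegrable_one_sub_sq_rpow {p : ℝ} (hp : -1 < p) :
    IntervalIntegrable (fun t : ℝ => (1 - t ^ 2) ^ p) volume (-1) 1 := by
  have h := intervalIntegrable_one_sub_sq_rpow_zero_one hp
  have h' : IntervalIntegrable (fun t : ℝ => (1 - t ^ 2) ^ p) volume (-1) 0 := by
    simpa using ((IntervalIntegrable.iff_comp_neg).mp h).symm
  exact h'.trans h

lemma hasDerivAt_intervalIntegral_exp_mul {w : ℝ → ℝ} {a b : ℝ}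
    (hw : IntervalIntegrable w volume a b) (u₀ : ℝ) :
    HasDerivAt (fun u => ∫ t in a..b, exp (u * t) * w t)
      (∫ t in a..b, t * exp (u₀ * t) * w t) u₀ := by
  set M := |a| + |b|
  have hF : ∀ u, IntervalIntegrable (fun t => exp (u * t) * w t) volume a b := fun u =>
    hw.continuousOn_mul (by fun_prop)
  have hF' : IntervalIntegrable (fun t => t * exp (u₀ * t) * w t) volume a b := by
    simpa only [mul_assoc] using hw.continuousOn_mul (g := fun t => t * exp (u₀ * t)) (by fun_prop)
  have hbound : ∀ t ∈ Ι a b, ∀ u ∈ Metric.ball u₀ 1,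
      ‖t * exp (u * t) * w t‖ ≤ M * exp ((|u₀| + 1) * M) * ‖w t‖ := by
    intro t ht u hu
    have htM : |t| ≤ M := by
      have hmin : -M ≤ min a b := le_min (by linarith [neg_abs_le a, abs_nonneg b])
        (by linarith [neg_abs_le b, abs_nonneg a])
      have hmax : max a b ≤ M := max_le (by linarith [le_abs_self a, abs_nonneg b])
        (by linarith [le_abs_self b, abs_nonneg a])
      exact abs_le.mpr ⟨by linarith [ht.1], by linarith [ht.2]⟩
    have hu' : |u| ≤ |u₀| + 1 := by
      have := abs_sub_abs_le_abs_sub u u₀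
      rw [Metric.mem_ball, Real.dist_eq] at hu
      linarith
    have hexp : exp (u * t) ≤ exp ((|u₀| + 1) * M) := by
      refine exp_le_exp.mpr ((le_abs_self _).trans ?_)
      rw [abs_mul]
      exact mul_le_mul hu' htM (abs_nonneg _) (by positivity)
    rw [norm_mul, norm_mul, Real.norm_eq_abs, Real.norm_of_nonneg (exp_pos _).le]
    gcongr
  refine (hasDerivAt_integral_of_dominated_loc_of_deriv_le (Metric.ball_mem_nhds u₀ one_pos)
    (Eventually.of_forall fun u => (hF u).def'.aestronglyMeasurable) (hF u₀)
    hF'.def'.aestronglyMeasurable (Eventually.of_forall hbound)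
    (hw.norm.const_mul _) (Eventually.of_forall fun t _ u _ => ?_)).2
  simpa [mul_comm] using ((hasDerivAt_mul_const t).exp (x := u)).mul_const (w t)

lemma integral_exp_mul_one_sub_sq_rpow_pos {p : ℝ} (hp : -1 < p) (κ : ℝ) :
    0 < ∫ t in (-1 : ℝ)..1, exp (κ * t) * (1 - t ^ 2) ^ p := by
  refine intervalIntegral_pos_of_pos_on
    ((intervalIntegrable_one_sub_sq_rpow hp).continuousOn_mul (by fun_prop))
    (fun t ht => ?_) (by norm_num)
  have : 0 < 1 - t ^ 2 := by nlinarith [ht.1, ht.2]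
  positivity

lemma besselI_pos {ν κ : ℝ} (hν : -1 / 2 < ν) (hκ : 0 < κ) : 0 < besselI ν κ := by
  have hΓ : 0 < Gamma (ν + 1 / 2) := Gamma_pos_of_pos (by linarith)
  have hJ := integral_exp_mul_one_sub_sq_rpow_pos (p := ν - 1 / 2) (by linarith) κ
  have := sqrt_pos.mpr pi_pos
  unfold besselI
  positivity

lemma differentiableAt_besselI {ν κ : ℝ} (hν : -1 / 2 < ν) (hκ : 0 < κ) :
    DifferentiableAt ℝ (besselI ν) κ := by
  have hJ := (hasDerivAt_intervalIntegral_exp_mul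
    (intervalIntegrable_one_sub_sq_rpow (p := ν - 1 / 2) (by linarith)) κ).differentiableAt
  have hpow : DifferentiableAt ℝ (fun u : ℝ => (u / 2) ^ ν) κ :=
    (differentiableAt_id.div_const 2).rpow_const (Or.inl (by positivity))
  exact (hpow.div_const _).mul hJ

lemma neg_half_lt_half_sub_one {k : ℕ} (hk : 2 ≤ k) : -1 / 2 < (k : ℝ) / 2 - 1 := by
  have : (2 : ℝ) ≤ k := by exact_mod_cast hk
  linarith

lemma cFvML_pos {k : ℕ} (hk : 2 ≤ k) {κ : ℝ} (hκ : 0 < κ) : 0 < cFvML k κ := by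
  have hΓ : 0 < Gamma ((k : ℝ) / 2) := Gamma_pos_of_pos (by positivity)
  have hI := besselI_pos (neg_half_lt_half_sub_one hk) hκ
  unfold cFvML
  positivity

lemma differentiableAt_cFvML {k : ℕ} (hk : 2 ≤ k) {κ : ℝ} (hκ : 0 < κ) :
    DifferentiableAt ℝ (cFvML k) κ := by
  have hΓ : 0 < Gamma ((k : ℝ) / 2) := Gamma_pos_of_pos (by positivity)
  have hI := besselI_pos (neg_half_lt_half_sub_one hk) hκ
  have hpow : DifferentiableAt ℝ (fun u : ℝ => (u / 2) ^ ((k : ℝ) / 2 - 1)) κ :=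
    (differentiableAt_id.div_const 2).rpow_const (Or.inl (by positivity))
  exact hpow.div ((differentiableAt_besselI (neg_half_lt_half_sub_one hk) hκ).const_mul _)
    (by positivity)

lemma sqrt_fvml {k : ℕ} (hk : 2 ≤ k) {κ : ℝ} (hκ : 0 < κ) (θ x : EuclideanSpace ℝ (Fin k)) :
    √(fvml k κ θ x) = √(cFvML k κ) * exp (κ * inner ℝ x θ / 2) := by
  rw [fvml, sqrt_mul (cFvML_pos hk hκ).le, ← sqrt_sq (exp_pos (κ * inner ℝ x θ / 2)).le,
    ← exp_nat_mul]
  push_cast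
  ring_nf

lemma exp_mul_half_le {κ u t : ℝ} (hu : |u - κ| ≤ 1) (ht : |t| ≤ 1) :
    exp (u * t / 2) ≤ exp ((|κ| + 1) / 2) := by
  have hu' : |u| ≤ |κ| + 1 := by linarith [abs_sub_abs_le_abs_sub u κ]
  have : u * t ≤ |κ| + 1 :=
    calc u * t ≤ |u| * |t| := (le_abs_self _).trans (abs_mul u t).le
      _ ≤ (|κ| + 1) * 1 := mul_le_mul hu' ht (abs_nonneg _) (by positivity)
      _ = |κ| + 1 := mul_one _
  exact exp_le_exp.mpr (by linarith)

lemma exp_add_mul_half {κ s t : ℝ} :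
    exp ((κ + s) * t / 2) = exp (κ * t / 2) * exp (s * t / 2) := by
  rw [← exp_add]
  ring_nf

lemma abs_mul_half_le_one {s t : ℝ} (hs : |s| ≤ 1) (ht : |t| ≤ 1) : |s * t / 2| ≤ 1 := by
  rw [abs_div, abs_mul, abs_two]
  nlinarith [abs_nonneg s, abs_nonneg t]

lemma abs_exp_add_mul_half_sub_le {κ s t : ℝ} (hs : |s| ≤ 1) (ht : |t| ≤ 1) :
    |exp ((κ + s) * t / 2) - exp (κ * t / 2)| ≤ exp ((|κ| + 1) / 2) * |s| := by
  have hE := exp_mul_half_le (κ := κ) (u := κ) (by simp) ht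
  have hy := abs_exp_sub_one_le (abs_mul_half_le_one hs ht)
  have hst : 2 * |s * t / 2| ≤ |s| := by
    rw [abs_div, abs_mul, abs_two]
    nlinarith [abs_nonneg s, abs_nonneg t]
  calc |exp ((κ + s) * t / 2) - exp (κ * t / 2)|
      = exp (κ * t / 2) * |exp (s * t / 2) - 1| := by
        rw [exp_add_mul_half, ← mul_sub_one, abs_mul, abs_of_pos (exp_pos _)]
    _ ≤ exp ((|κ| + 1) / 2) * |s| :=
        mul_le_mul hE (hy.trans hst) (abs_nonneg _) (exp_pos _).le

lemma abs_exp_add_mul_half_sub_sub_le {κ s t : ℝ} (hs : |s| ≤ 1) (ht : |t| ≤ 1) :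
    |exp ((κ + s) * t / 2) - exp (κ * t / 2) - s * (t / 2) * exp (κ * t / 2)|
      ≤ exp ((|κ| + 1) / 2) * (s ^ 2 / 4) := by
  have hE := exp_mul_half_le (κ := κ) (u := κ) (by simp) ht
  have hy := abs_exp_sub_one_sub_id_le (abs_mul_half_le_one hs ht)
  have hst : (s * t / 2) ^ 2 ≤ s ^ 2 / 4 := by
    have : t ^ 2 ≤ 1 := by nlinarith [sq_abs t, abs_nonneg t]
    nlinarith [sq_nonneg s]
  calc |exp ((κ + s) * t / 2) - exp (κ * t / 2) - s * (t / 2) * exp (κ * t / 2)|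
      = exp (κ * t / 2) * |exp (s * t / 2) - 1 - s * t / 2| := by
        rw [exp_add_mul_half, ← abs_of_pos (exp_pos (κ * t / 2)), ← abs_mul,
          abs_of_pos (exp_pos (κ * t / 2))]
        ring_nf
    _ ≤ exp ((|κ| + 1) / 2) * (s ^ 2 / 4) :=
        mul_le_mul hE (hy.trans hst) (abs_nonneg _) (exp_pos _).le

lemma abs_mul_exp_sub_sub_le (a₀ a₁ A κ s t : ℝ) (hs : |s| ≤ 1) (ht : |t| ≤ 1) :
    |a₁ * exp ((κ + s) * t / 2) - a₀ * exp (κ * t / 2) -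
        s * (t / 2 * a₀ * exp (κ * t / 2) + A * exp (κ * t / 2))|
      ≤ exp ((|κ| + 1) / 2) * (|a₁ - a₀ - s * A| + (|a₀| / 4 + |A|) * s ^ 2) := by
  set E₀ := exp (κ * t / 2)
  set E₁ := exp ((κ + s) * t / 2)
  have h₁ : E₁ ≤ exp ((|κ| + 1) / 2) := exp_mul_half_le (by simpa using hs) ht
  have h₂ := abs_exp_add_mul_half_sub_sub_le (κ := κ) hs ht
  have h₃ := abs_exp_add_mul_half_sub_le (κ := κ) hs ht
  -- the product rule, written for first-order Taylor remainders
  have hsplit : a₁ * E₁ - a₀ * E₀ - s * (t / 2 * a₀ * E₀ + A * E₀) =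
      (a₁ - a₀ - s * A) * E₁ + a₀ * (E₁ - E₀ - s * (t / 2) * E₀) + s * A * (E₁ - E₀) := by
    ring
  rw [hsplit]
  refine (abs_add_three _ _ _).trans ?_
  rw [abs_mul, abs_mul, abs_mul, abs_mul, abs_of_pos (exp_pos _)]
  calc |a₁ - a₀ - s * A| * E₁ + |a₀| * |E₁ - E₀ - s * (t / 2) * E₀| + |s| * |A| * |E₁ - E₀|
      ≤ |a₁ - a₀ - s * A| * exp ((|κ| + 1) / 2) + |a₀| * (exp ((|κ| + 1) / 2) * (s ^ 2 / 4)) +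
          |s| * |A| * (exp ((|κ| + 1) / 2) * |s|) := by gcongr
    _ = exp ((|κ| + 1) / 2) * (|a₁ - a₀ - s * A| + (|a₀| / 4 + |A|) * s ^ 2) := by
        rw [← sq_abs s]
        ring

lemma isLittleO_integral_sq {ι α : Type*} [MeasurableSpace α] {μ : Measure α}
    [IsFiniteMeasure μ] {l : Filter ι} {g : ι → α → ℝ} {e φ : ι → ℝ} (he : e =o[l] φ)
    (hg : ∀ᶠ i in l, ∀ x, |g i x| ≤ e i) :
    (fun i => ∫ x, g i x ^ 2 ∂μ) =o[l] fun i => φ i ^ 2 := by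
  refine IsBigO.trans_isLittleO ?_ (he.pow two_pos)
  refine IsBigO.of_bound (μ.real univ) (hg.mono fun i hi => ?_)
  have hsq : ∀ x, ‖g i x ^ 2‖ ≤ e i ^ 2 := fun x => by
    rw [norm_pow, Real.norm_eq_abs]
    exact pow_le_pow_left₀ (abs_nonneg _) (hi x) 2
  calc ‖∫ x, g i x ^ 2 ∂μ‖ ≤ e i ^ 2 * μ.real univ :=
        norm_integral_le_of_norm_le_const (Eventually.of_forall hsq)
    _ = μ.real univ * ‖e i ^ 2‖ := by rw [Real.norm_of_nonneg (sq_nonneg _), mul_comm]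

/-- `κ ↦ √f_{κ,θ}` is differentiable in quadratic mean:
`∫_{S^{k-1}} (√f_{κ+s,θ} - √f_{κ,θ} - s ∂_κ √f_{κ,θ})² dσ = o(s²)` as `s → 0`, where
`∂_κ √f_{κ,θ}(x) = (x'θ/2)√c_{k,κ} e^{κ x'θ/2} + (∂_κ √c_{k,κ}) e^{κ x'θ/2}`. -/
theorem stmt18 (k : ℕ) (hk : 2 ≤ k) (κ : ℝ) (hκ : 0 < κ)
    (θ : EuclideanSpace ℝ (Fin k)) (hθ : ‖θ‖ = 1) :
    (fun s : ℝ =>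
        ∫ x : Metric.sphere (0 : EuclideanSpace ℝ (Fin k)) 1,
          (Real.sqrt (fvml k (κ + s) θ (x : EuclideanSpace ℝ (Fin k))) -
            Real.sqrt (fvml k κ θ (x : EuclideanSpace ℝ (Fin k))) -
            s * (((inner ℝ (x : EuclideanSpace ℝ (Fin k)) θ : ℝ) / 2) *
                  Real.sqrt (cFvML k κ) *
                  Real.exp (κ * (inner ℝ (x : EuclideanSpace ℝ (Fin k)) θ : ℝ) / 2) +
                deriv (fun u => Real.sqrt (cFvML k u)) κ *
                  Real.exp (κ * (inner ℝ (x : EuclideanSpace ℝ (Fin k)) θ : ℝ) / 2))) ^ 2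
          ∂((volume : Measure (EuclideanSpace ℝ (Fin k))).toSphere))
      =o[nhds 0] (fun s : ℝ => s ^ 2) := by
  set a : ℝ → ℝ := fun u => √(cFvML k u)
  set A := deriv a κ
  have hrem : (fun s => a (κ + s) - a κ - s * A) =o[𝓝 0] fun s => s :=
    hasDerivAt_iff_isLittleO_nhds_zero.mp
      ((differentiableAt_cFvML hk hκ).sqrt (cFvML_pos hk hκ).ne').hasDerivAt
  refine isLittleO_integral_sq (φ := fun s => s) (e := fun s =>
    exp ((|κ| + 1) / 2) * (|a (κ + s) - a κ - s * A| + (|a κ| / 4 + |A|) * s ^ 2))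
    ((hrem.abs_left.add ((isLittleO_pow_id one_lt_two).const_mul_left _)).const_mul_left _) ?_
  have hs : ∀ᶠ s : ℝ in 𝓝 0, |s| < min 1 κ := by
    simpa only [sub_zero] using eventually_abs_sub_lt (0 : ℝ) (lt_min one_pos hκ)
  filter_upwards [hs] with s hs x
  obtain ⟨hs₁, hsκ⟩ := lt_min_iff.mp hs
  have hx : |inner ℝ (x : EuclideanSpace ℝ (Fin k)) θ| ≤ 1 := by
    simpa [hθ] using abs_real_inner_le_norm (x : EuclideanSpace ℝ (Fin k)) θ
  rw [sqrt_fvml hk (by linarith [neg_abs_le s]), sqrt_fvml hk hκ]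
  exact abs_mul_exp_sub_sub_le _ _ _ _ _ _ hs₁.le hx
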